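/- Let w₁, w₂ : [0,ℓ] × ℝ → ℝ be smooth functions satisfying the beam equations ẅ₁ + (EI/ρA) w₁⁽⁴⁾ = ω̇₃w₂ − (ω̇₂ + ω₁ω₃)(ζ+ℓ₀) + 2ω₃ẇ₂ and ẅ₂ + (EI/ρA) w₂⁽⁴⁾ = −ω̇₃w₁ + (ω̇₁ − ω₂ω₃)(ζ+ℓ₀) − 2ω₃ẇ₁ on [0,ℓ], with boundary conditions wⱼ(0,t) = wⱼ'(0,t) = 0 and wⱼ''(ℓ,t) = wⱼ'''(ℓ,t) = 0 (j = 1,2). Then the energy V(t) = (1/2)∫₀^ℓ (ẇ₁² + ẇ₂² + (EI/ρA)((w₁'')² + (w₂'')²)) dζ satisfies V̇ = (ω̇₁ − ω₂ω₃)γ₁ + (ω̇₂ + ω₁ω₃)γ₂ + ω̇₃ γ₃, where γ₁ = ∫₀^ℓ (ζ+ℓ₀)ẇ₂ dζ, γ₂ = −∫₀^ℓ (ζ+ℓ₀)ẇ₁ dζ, γ₃ = ∫₀^ℓ (w₂ẇ₁ − w₁ẇ₂) dζ. -/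

import Mathlib

open intervalIntegral

noncomputable def pdZ (W : ℝ × ℝ → ℝ) : ℝ × ℝ → ℝ := fun p => fderiv ℝ W p (1, 0)
noncomputable def pdT (W : ℝ × ℝ → ℝ) : ℝ × ℝ → ℝ := fun p => fderiv ℝ W p (0, 1)

lemma contDiff_pdv {W : ℝ × ℝ → ℝ} (hW : ContDiff ℝ (⊤ : ℕ∞) W) (v : ℝ × ℝ) :
    ContDiff ℝ (⊤ : ℕ∞) (fun p => fderiv ℝ W p v) :=
  (ContinuousLinearMap.apply ℝ ℝ v).contDiff.comp (hW.fderiv_right (by simp))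

lemma pdZ_contDiff {W : ℝ × ℝ → ℝ} (hW : ContDiff ℝ (⊤ : ℕ∞) W) : ContDiff ℝ (⊤ : ℕ∞) (pdZ W) :=
  contDiff_pdv hW _
lemma pdT_contDiff {W : ℝ × ℝ → ℝ} (hW : ContDiff ℝ (⊤ : ℕ∞) W) : ContDiff ℝ (⊤ : ℕ∞) (pdT W) :=
  contDiff_pdv hW _

lemma hasDerivAt_sliceZ {W : ℝ × ℝ → ℝ} (hW : ContDiff ℝ (⊤ : ℕ∞) W) (ζ t : ℝ) :
    HasDerivAt (fun z => W (z, t)) (pdZ W (ζ, t)) ζ := by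
  have h := (hW.differentiable (by simp) (ζ, t)).hasFDerivAt
  have h2 : HasDerivAt (fun z : ℝ => (z, t)) ((1 : ℝ), (0 : ℝ)) ζ :=
    (hasDerivAt_id ζ).prodMk (hasDerivAt_const ζ t)
  exact h.comp_hasDerivAt ζ h2

lemma hasDerivAt_sliceT {W : ℝ × ℝ → ℝ} (hW : ContDiff ℝ (⊤ : ℕ∞) W) (ζ t : ℝ) :
    HasDerivAt (fun s => W (ζ, s)) (pdT W (ζ, t)) t := by
  have h := (hW.differentiable (by simp) (ζ, t)).hasFDerivAt
  have h2 : HasDerivAt (fun s : ℝ => (ζ, s)) ((0 : ℝ), (1 : ℝ)) t :=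
    (hasDerivAt_const t ζ).prodMk (hasDerivAt_id t)
  exact h.comp_hasDerivAt t h2

lemma pd_swap {W : ℝ × ℝ → ℝ} (hW : ContDiff ℝ (⊤ : ℕ∞) W) : pdZ (pdT W) = pdT (pdZ W) := by
  funext p
  have hd : ∀ q, HasFDerivAt W (fderiv ℝ W q) q := fun q =>
    (hW.differentiable (by simp) q).hasFDerivAt
  have hd2 : HasFDerivAt (fderiv ℝ W) (fderiv ℝ (fderiv ℝ W) p) p :=
    ((hW.fderiv_right (m := (⊤ : ℕ∞)) (by simp)).differentiable (by simp) p).hasFDerivAt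
  have hsym := second_derivative_symmetric hd hd2 (1, 0) (0, 1)
  have e1 : ∀ (v u : ℝ × ℝ) (q : ℝ × ℝ),
      fderiv ℝ (fun r => fderiv ℝ W r v) q u = fderiv ℝ (fderiv ℝ W) q u v := by
    intro v u q
    have hq : HasFDerivAt (fderiv ℝ W) (fderiv ℝ (fderiv ℝ W) q) q :=
      ((hW.fderiv_right (m := (⊤ : ℕ∞)) (by simp)).differentiable (by simp) q).hasFDerivAt
    have h3 := ((ContinuousLinearMap.apply ℝ ℝ v).hasFDerivAt.comp q hq).fderiv
    have h4 : (fun r => fderiv ℝ W r v) = ⇑(ContinuousLinearMap.apply ℝ ℝ v) ∘ fderiv ℝ W := rfl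
    rw [h4, h3]; rfl
  show fderiv ℝ (pdT W) p (1,0) = fderiv ℝ (pdZ W) p (0,1)
  rw [show pdT W = fun r => fderiv ℝ W r (0,1) from rfl,
      show pdZ W = fun r => fderiv ℝ W r (1,0) from rfl, e1, e1]
  exact hsym

noncomputable def pdn : ℕ → (ℝ × ℝ → ℝ) → (ℝ × ℝ → ℝ)
  | 0, W => W
  | (n+1), W => pdZ (pdn n W)

lemma pdn_contDiff {W : ℝ × ℝ → ℝ} (hW : ContDiff ℝ (⊤ : ℕ∞) W) : ∀ n, ContDiff ℝ (⊤ : ℕ∞) (pdn n W)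
  | 0 => hW
  | (n+1) => pdZ_contDiff (pdn_contDiff hW n)

lemma pdn_succ' : ∀ (n : ℕ) (W : ℝ × ℝ → ℝ), pdn (n+1) W = pdn n (pdZ W)
  | 0, _ => rfl
  | (n+1), W => by
      rw [show pdn (n+2) W = pdZ (pdn (n+1) W) from rfl, pdn_succ' n W]; rfl

lemma deriv_sliceZ {W : ℝ × ℝ → ℝ} (hW : ContDiff ℝ (⊤ : ℕ∞) W) (t : ℝ) :
    deriv (fun z => W (z, t)) = fun ζ => pdZ W (ζ, t) :=
  funext fun ζ => (hasDerivAt_sliceZ hW ζ t).deriv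

lemma iteratedDeriv_slice {W : ℝ × ℝ → ℝ} (hW : ContDiff ℝ (⊤ : ℕ∞) W) (t : ℝ) :
    ∀ n, iteratedDeriv n (fun z => W (z, t)) = fun ζ => pdn n W (ζ, t)
  | 0 => by simp [pdn, iteratedDeriv_zero]
  | (n+1) => by
      rw [iteratedDeriv_succ', deriv_sliceZ hW t, pdn_succ']
      exact iteratedDeriv_slice (pdZ_contDiff hW) t n

lemma cont_sliceZ {G : ℝ × ℝ → ℝ} (hG : Continuous G) (t : ℝ) :
    Continuous fun ζ => G (ζ, t) :=
  hG.comp (continuous_id.prodMk continuous_const)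

lemma intInt {G : ℝ × ℝ → ℝ} (hG : Continuous G) (t a b : ℝ) :
    IntervalIntegrable (fun ζ => G (ζ, t)) MeasureTheory.volume a b :=
  (cont_sliceZ hG t).intervalIntegrable a b

/-- Differentiation under the interval integral for smooth integrands. -/
lemma hasDerivAt_param_integral {G : ℝ × ℝ → ℝ} (hG : ContDiff ℝ (⊤ : ℕ∞) G) (ℓ t : ℝ) :
    HasDerivAt (fun s => ∫ ζ in (0:ℝ)..ℓ, G (ζ, s)) (∫ ζ in (0:ℝ)..ℓ, pdT G (ζ, t)) t := by
  have hGc : Continuous G := hG.continuous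
  have hG'c : Continuous (pdT G) := (pdT_contDiff hG).continuous
  obtain ⟨C, hC⟩ : ∃ C, ∀ p ∈ (Set.Icc (min 0 ℓ) (max 0 ℓ)) ×ˢ Set.Icc (t-1) (t+1),
      ‖pdT G p‖ ≤ C :=
    (isCompact_Icc.prod isCompact_Icc).exists_bound_of_continuousOn hG'c.continuousOn
  have := intervalIntegral.hasDerivAt_integral_of_dominated_loc_of_deriv_le
    (F := fun s ζ => G (ζ, s)) (F' := fun s ζ => pdT G (ζ, s)) (x₀ := t)
    (a := 0) (b := ℓ) (bound := fun _ => C) (μ := MeasureTheory.volume)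
    (s := Metric.ball t 1) (Metric.ball_mem_nhds t one_pos)
    (Filter.Eventually.of_forall fun s => (cont_sliceZ hGc s).aestronglyMeasurable)
    (intInt hGc t 0 ℓ)
    (cont_sliceZ hG'c t).aestronglyMeasurable
    (Filter.Eventually.of_forall fun ζ hζ s hs => by
      rw [Real.ball_eq_Ioo] at hs
      exact hC (ζ, s) ⟨⟨hζ.1.le, hζ.2⟩, ⟨hs.1.le, hs.2.le⟩⟩)
    (intervalIntegrable_const)
    (Filter.Eventually.of_forall fun ζ _ s _ => hasDerivAt_sliceT hG ζ s)
  exact this.2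

/-- Double integration by parts with the beam boundary conditions. -/
lemma ibp_beam {W : ℝ × ℝ → ℝ} (hW : ContDiff ℝ (⊤ : ℕ∞) W) (ℓ t : ℝ)
    (hv0 : pdT W (0, t) = 0) (hv'0 : pdZ (pdT W) (0, t) = 0)
    (h2ℓ : pdn 2 W (ℓ, t) = 0) (h3ℓ : pdn 3 W (ℓ, t) = 0) :
    (∫ ζ in (0:ℝ)..ℓ, pdn 2 W (ζ, t) * pdZ (pdZ (pdT W)) (ζ, t))
      = ∫ ζ in (0:ℝ)..ℓ, pdn 4 W (ζ, t) * pdT W (ζ, t) := by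
  have hT := pdT_contDiff hW
  have hT1 := pdZ_contDiff hT
  have hT2 := pdZ_contDiff hT1
  have h2 := pdn_contDiff hW 2
  have h3 := pdn_contDiff hW 3
  have h4 := pdn_contDiff hW 4
  have step1 : (∫ ζ in (0:ℝ)..ℓ, pdn 2 W (ζ, t) * pdZ (pdZ (pdT W)) (ζ, t))
      = - ∫ ζ in (0:ℝ)..ℓ, pdn 3 W (ζ, t) * pdZ (pdT W) (ζ, t) := by
    have h := intervalIntegral.integral_mul_deriv_eq_deriv_mul
      (u := fun ζ => pdn 2 W (ζ, t)) (u' := fun ζ => pdn 3 W (ζ, t))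
      (v := fun ζ => pdZ (pdT W) (ζ, t)) (v' := fun ζ => pdZ (pdZ (pdT W)) (ζ, t))
      (a := 0) (b := ℓ)
      (fun ζ _ => hasDerivAt_sliceZ h2 ζ t)
      (fun ζ _ => hasDerivAt_sliceZ hT1 ζ t)
      (intInt h3.continuous t 0 ℓ) (intInt hT2.continuous t 0 ℓ)
    rw [h]; simp only [h2ℓ, hv'0]; ring
  have step2 : (∫ ζ in (0:ℝ)..ℓ, pdn 3 W (ζ, t) * pdZ (pdT W) (ζ, t))
      = - ∫ ζ in (0:ℝ)..ℓ, pdn 4 W (ζ, t) * pdT W (ζ, t) := by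
    have h := intervalIntegral.integral_mul_deriv_eq_deriv_mul
      (u := fun ζ => pdn 3 W (ζ, t)) (u' := fun ζ => pdn 4 W (ζ, t))
      (v := fun ζ => pdT W (ζ, t)) (v' := fun ζ => pdZ (pdT W) (ζ, t))
      (a := 0) (b := ℓ)
      (fun ζ _ => hasDerivAt_sliceZ h3 ζ t)
      (fun ζ _ => hasDerivAt_sliceZ hT ζ t)
      (intInt h4.continuous t 0 ℓ) (intInt hT1.continuous t 0 ℓ)
    rw [h]; simp only [h3ℓ, hv0]; ring
  rw [step1, step2, neg_neg]

lemma beam_core (c ℓ ℓ0 : ℝ) (hℓ : 0 < ℓ) (W1 W2 : ℝ × ℝ → ℝ)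
    (hw1 : ContDiff ℝ (⊤ : ℕ∞) W1) (hw2 : ContDiff ℝ (⊤ : ℕ∞) W2)
    (a b d e : ℝ) (t : ℝ)
    (hpde1 : ∀ ζ ∈ Set.Icc 0 ℓ,
      pdT (pdT W1) (ζ, t) + c * pdn 4 W1 (ζ, t)
        = d * W2 (ζ, t) - a * (ζ + ℓ0) + 2 * e * pdT W2 (ζ, t))
    (hpde2 : ∀ ζ ∈ Set.Icc 0 ℓ,
      pdT (pdT W2) (ζ, t) + c * pdn 4 W2 (ζ, t)
        = -d * W1 (ζ, t) + b * (ζ + ℓ0) - 2 * e * pdT W1 (ζ, t))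
    (hb1 : pdT W1 (0, t) = 0) (hb2 : pdT W2 (0, t) = 0)
    (hb1' : pdZ (pdT W1) (0, t) = 0) (hb2' : pdZ (pdT W2) (0, t) = 0)
    (hl1 : pdn 2 W1 (ℓ, t) = 0) (hl2 : pdn 2 W2 (ℓ, t) = 0)
    (hl1' : pdn 3 W1 (ℓ, t) = 0) (hl2' : pdn 3 W2 (ℓ, t) = 0) :
    HasDerivAt
      (fun s => (1 / 2) * ∫ ζ in (0:ℝ)..ℓ,
        (pdT W1 (ζ, s)) ^ 2 + (pdT W2 (ζ, s)) ^ 2 +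
          c * ((pdn 2 W1 (ζ, s)) ^ 2 + (pdn 2 W2 (ζ, s)) ^ 2))
      (b * (∫ ζ in (0:ℝ)..ℓ, (ζ + ℓ0) * pdT W2 (ζ, t))
        + a * (-∫ ζ in (0:ℝ)..ℓ, (ζ + ℓ0) * pdT W1 (ζ, t))
        + d * (∫ ζ in (0:ℝ)..ℓ,
            (W2 (ζ, t) * pdT W1 (ζ, t) - W1 (ζ, t) * pdT W2 (ζ, t)))) t := by
  have cP1 : Continuous (pdT W1) := (pdT_contDiff hw1).continuous
  have cP2 : Continuous (pdT W2) := (pdT_contDiff hw2).continuous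
  have cT1 : Continuous (pdT (pdT W1)) := (pdT_contDiff (pdT_contDiff hw1)).continuous
  have cT2 : Continuous (pdT (pdT W2)) := (pdT_contDiff (pdT_contDiff hw2)).continuous
  have cQ1 : Continuous (pdn 2 W1) := (pdn_contDiff hw1 2).continuous
  have cQ2 : Continuous (pdn 2 W2) := (pdn_contDiff hw2 2).continuous
  have cR1 : Continuous (pdZ (pdZ (pdT W1))) :=
    (pdZ_contDiff (pdZ_contDiff (pdT_contDiff hw1))).continuous
  have cR2 : Continuous (pdZ (pdZ (pdT W2))) :=
    (pdZ_contDiff (pdZ_contDiff (pdT_contDiff hw2))).continuous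
  have c41 : Continuous (pdn 4 W1) := (pdn_contDiff hw1 4).continuous
  have c42 : Continuous (pdn 4 W2) := (pdn_contDiff hw2 4).continuous
  have cW1 : Continuous W1 := hw1.continuous
  have cW2 : Continuous W2 := hw2.continuous
  -- the energy density
  have hGc : ContDiff ℝ (⊤ : ℕ∞) (fun p : ℝ × ℝ =>
      (pdT W1 p) ^ 2 + (pdT W2 p) ^ 2 + c * ((pdn 2 W1 p) ^ 2 + (pdn 2 W2 p) ^ 2)) :=
    (((pdT_contDiff hw1).pow 2).add ((pdT_contDiff hw2).pow 2)).add
      (contDiff_const.mul (((pdn_contDiff hw1 2).pow 2).add ((pdn_contDiff hw2 2).pow 2)))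
  have hswap1 : pdT (pdn 2 W1) = pdZ (pdZ (pdT W1)) := by
    show pdT (pdZ (pdZ W1)) = _
    rw [← pd_swap (pdZ_contDiff hw1), ← pd_swap hw1]
  have hswap2 : pdT (pdn 2 W2) = pdZ (pdZ (pdT W2)) := by
    show pdT (pdZ (pdZ W2)) = _
    rw [← pd_swap (pdZ_contDiff hw2), ← pd_swap hw2]
  -- pointwise time derivative of the energy density
  have hpt : ∀ ζ : ℝ, pdT (fun p : ℝ × ℝ =>
      (pdT W1 p) ^ 2 + (pdT W2 p) ^ 2 + c * ((pdn 2 W1 p) ^ 2 + (pdn 2 W2 p) ^ 2)) (ζ, t)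
      = 2 * pdT W1 (ζ, t) * pdT (pdT W1) (ζ, t) + 2 * pdT W2 (ζ, t) * pdT (pdT W2) (ζ, t)
        + c * (2 * pdn 2 W1 (ζ, t) * pdZ (pdZ (pdT W1)) (ζ, t)
             + 2 * pdn 2 W2 (ζ, t) * pdZ (pdZ (pdT W2)) (ζ, t)) := by
    intro ζ
    have h1 := hasDerivAt_sliceT hGc ζ t
    have comb := ((((hasDerivAt_sliceT (pdT_contDiff hw1) ζ t).pow 2).add
        ((hasDerivAt_sliceT (pdT_contDiff hw2) ζ t).pow 2)).add
        ((((hasDerivAt_sliceT (pdn_contDiff hw1 2) ζ t).pow 2).add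
          ((hasDerivAt_sliceT (pdn_contDiff hw2 2) ζ t).pow 2)).const_mul c))
    have := h1.unique comb
    rw [this, ← hswap1, ← hswap2]
    push_cast
    ring
  have key := (hasDerivAt_param_integral hGc ℓ t).const_mul (1/2 : ℝ)
  have hI1 := ibp_beam hw1 ℓ t hb1 hb1' hl1 hl1'
  have hI2 := ibp_beam hw2 ℓ t hb2 hb2' hl2 hl2'
  have hicc : Set.uIcc (0:ℝ) ℓ = Set.Icc 0 ℓ := Set.uIcc_of_le hℓ.le
  have iA : IntervalIntegrable (fun ζ => pdT W1 (ζ,t) * pdT (pdT W1) (ζ,t))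
      MeasureTheory.volume 0 ℓ :=
    ((cont_sliceZ cP1 t).mul (cont_sliceZ cT1 t)).intervalIntegrable 0 ℓ
  have iB : IntervalIntegrable (fun ζ => pdT W2 (ζ,t) * pdT (pdT W2) (ζ,t))
      MeasureTheory.volume 0 ℓ :=
    ((cont_sliceZ cP2 t).mul (cont_sliceZ cT2 t)).intervalIntegrable 0 ℓ
  have iC : IntervalIntegrable (fun ζ => c * (pdn 2 W1 (ζ,t) * pdZ (pdZ (pdT W1)) (ζ,t)))
      MeasureTheory.volume 0 ℓ :=
    (continuous_const.mul ((cont_sliceZ cQ1 t).mul (cont_sliceZ cR1 t))).intervalIntegrable 0 ℓ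
  have iD : IntervalIntegrable (fun ζ => c * (pdn 2 W2 (ζ,t) * pdZ (pdZ (pdT W2)) (ζ,t)))
      MeasureTheory.volume 0 ℓ :=
    (continuous_const.mul ((cont_sliceZ cQ2 t).mul (cont_sliceZ cR2 t))).intervalIntegrable 0 ℓ
  have iE : IntervalIntegrable (fun ζ => c * (pdn 4 W1 (ζ,t) * pdT W1 (ζ,t)))
      MeasureTheory.volume 0 ℓ :=
    (continuous_const.mul ((cont_sliceZ c41 t).mul (cont_sliceZ cP1 t))).intervalIntegrable 0 ℓ
  have iF : IntervalIntegrable (fun ζ => c * (pdn 4 W2 (ζ,t) * pdT W2 (ζ,t)))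
      MeasureTheory.volume 0 ℓ :=
    (continuous_const.mul ((cont_sliceZ c42 t).mul (cont_sliceZ cP2 t))).intervalIntegrable 0 ℓ
  have iG1 : IntervalIntegrable (fun ζ => b * ((ζ + ℓ0) * pdT W2 (ζ,t)))
      MeasureTheory.volume 0 ℓ :=
    (continuous_const.mul ((continuous_id.add continuous_const).mul
      (cont_sliceZ cP2 t))).intervalIntegrable 0 ℓ
  have iG2 : IntervalIntegrable (fun ζ => a * -((ζ + ℓ0) * pdT W1 (ζ,t)))
      MeasureTheory.volume 0 ℓ :=
    (continuous_const.mul (((continuous_id.add continuous_const).mul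
      (cont_sliceZ cP1 t)).neg)).intervalIntegrable 0 ℓ
  have iG3 : IntervalIntegrable
      (fun ζ => d * (W2 (ζ,t) * pdT W1 (ζ,t) - W1 (ζ,t) * pdT W2 (ζ,t)))
      MeasureTheory.volume 0 ℓ :=
    (continuous_const.mul (((cont_sliceZ cW2 t).mul (cont_sliceZ cP1 t)).sub
      ((cont_sliceZ cW1 t).mul (cont_sliceZ cP2 t)))).intervalIntegrable 0 ℓ
  have hval : (1/2 : ℝ) * (∫ ζ in (0:ℝ)..ℓ, pdT (fun p : ℝ × ℝ =>
        (pdT W1 p) ^ 2 + (pdT W2 p) ^ 2 + c * ((pdn 2 W1 p) ^ 2 + (pdn 2 W2 p) ^ 2)) (ζ, t))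
      = b * (∫ ζ in (0:ℝ)..ℓ, (ζ + ℓ0) * pdT W2 (ζ, t))
        + a * (-∫ ζ in (0:ℝ)..ℓ, (ζ + ℓ0) * pdT W1 (ζ, t))
        + d * (∫ ζ in (0:ℝ)..ℓ,
            (W2 (ζ, t) * pdT W1 (ζ, t) - W1 (ζ, t) * pdT W2 (ζ, t))) := by
    calc (1/2 : ℝ) * (∫ ζ in (0:ℝ)..ℓ, pdT (fun p : ℝ × ℝ =>
          (pdT W1 p) ^ 2 + (pdT W2 p) ^ 2 + c * ((pdn 2 W1 p) ^ 2 + (pdn 2 W2 p) ^ 2)) (ζ, t))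
        = ∫ ζ in (0:ℝ)..ℓ,
            ((pdT W1 (ζ,t) * pdT (pdT W1) (ζ,t) + pdT W2 (ζ,t) * pdT (pdT W2) (ζ,t))
             + (c * (pdn 2 W1 (ζ,t) * pdZ (pdZ (pdT W1)) (ζ,t))
                + c * (pdn 2 W2 (ζ,t) * pdZ (pdZ (pdT W2)) (ζ,t)))) := by
          rw [← intervalIntegral.integral_const_mul]
          refine intervalIntegral.integral_congr fun ζ _ => ?_
          rw [hpt ζ]; ring
      _ = ((∫ ζ in (0:ℝ)..ℓ, pdT W1 (ζ,t) * pdT (pdT W1) (ζ,t))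
            + ∫ ζ in (0:ℝ)..ℓ, pdT W2 (ζ,t) * pdT (pdT W2) (ζ,t))
          + (c * (∫ ζ in (0:ℝ)..ℓ, pdn 2 W1 (ζ,t) * pdZ (pdZ (pdT W1)) (ζ,t))
            + c * (∫ ζ in (0:ℝ)..ℓ, pdn 2 W2 (ζ,t) * pdZ (pdZ (pdT W2)) (ζ,t))) := by
          rw [intervalIntegral.integral_add (iA.add iB) (iC.add iD),
            intervalIntegral.integral_add iA iB, intervalIntegral.integral_add iC iD,
            intervalIntegral.integral_const_mul, intervalIntegral.integral_const_mul]
      _ = ((∫ ζ in (0:ℝ)..ℓ, pdT W1 (ζ,t) * pdT (pdT W1) (ζ,t))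
            + ∫ ζ in (0:ℝ)..ℓ, pdT W2 (ζ,t) * pdT (pdT W2) (ζ,t))
          + (c * (∫ ζ in (0:ℝ)..ℓ, pdn 4 W1 (ζ,t) * pdT W1 (ζ,t))
            + c * (∫ ζ in (0:ℝ)..ℓ, pdn 4 W2 (ζ,t) * pdT W2 (ζ,t))) := by
          rw [hI1, hI2]
      _ = ∫ ζ in (0:ℝ)..ℓ,
            ((pdT W1 (ζ,t) * pdT (pdT W1) (ζ,t) + pdT W2 (ζ,t) * pdT (pdT W2) (ζ,t))
             + (c * (pdn 4 W1 (ζ,t) * pdT W1 (ζ,t))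
                + c * (pdn 4 W2 (ζ,t) * pdT W2 (ζ,t)))) := by
          rw [intervalIntegral.integral_add (iA.add iB) (iE.add iF),
            intervalIntegral.integral_add iA iB, intervalIntegral.integral_add iE iF,
            intervalIntegral.integral_const_mul, intervalIntegral.integral_const_mul]
      _ = ∫ ζ in (0:ℝ)..ℓ,
            (b * ((ζ + ℓ0) * pdT W2 (ζ,t)) + a * -((ζ + ℓ0) * pdT W1 (ζ,t))
              + d * (W2 (ζ,t) * pdT W1 (ζ,t) - W1 (ζ,t) * pdT W2 (ζ,t))) := by
          refine intervalIntegral.integral_congr fun ζ hζ => ?_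
          rw [hicc] at hζ
          have h1 := hpde1 ζ hζ
          have h2 := hpde2 ζ hζ
          have := congrArg (fun x => pdT W1 (ζ,t) * x) h1
          linear_combination pdT W1 (ζ,t) * h1 + pdT W2 (ζ,t) * h2
      _ = b * (∫ ζ in (0:ℝ)..ℓ, (ζ + ℓ0) * pdT W2 (ζ, t))
          + a * (-∫ ζ in (0:ℝ)..ℓ, (ζ + ℓ0) * pdT W1 (ζ, t))
          + d * (∫ ζ in (0:ℝ)..ℓ,
              (W2 (ζ, t) * pdT W1 (ζ, t) - W1 (ζ, t) * pdT W2 (ζ, t))) := by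
          rw [intervalIntegral.integral_add (iG1.add iG2) iG3,
            intervalIntegral.integral_add iG1 iG2,
            intervalIntegral.integral_const_mul, intervalIntegral.integral_const_mul,
            intervalIntegral.integral_const_mul, intervalIntegral.integral_neg]
  exact hval ▸ key

noncomputable def unc (w : ℝ → ℝ → ℝ) : ℝ × ℝ → ℝ := fun p => w p.1 p.2

/-- Energy identity for the beam equations: the time derivative of the beam
energy `V` equals `(ω̇₁ − ω₂ω₃)γ₁ + (ω̇₂ + ω₁ω₃)γ₂ + ω̇₃γ₃`. -/
theorem beam_energy_derivative
    (E I ρ A ℓ ℓ0 : ℝ) (hE : 0 < E) (hI : 0 < I) (hρ : 0 < ρ) (hA : 0 < A)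
    (hℓ : 0 < ℓ) (hℓ0 : 0 < ℓ0)
    (w1 w2 : ℝ → ℝ → ℝ)  -- w j ζ t
    (ω1 ω2 ω3 : ℝ → ℝ)
    (hw1 : ContDiff ℝ (⊤ : ℕ∞) (fun p : ℝ × ℝ => w1 p.1 p.2))
    (hw2 : ContDiff ℝ (⊤ : ℕ∞) (fun p : ℝ × ℝ => w2 p.1 p.2))
    (hω1 : Differentiable ℝ ω1) (hω2 : Differentiable ℝ ω2)
    (hω3 : Differentiable ℝ ω3)
    (hpde1 : ∀ t, ∀ ζ ∈ Set.Icc 0 ℓ,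
      deriv (deriv (w1 ζ)) t + (E * I / (ρ * A)) * iteratedDeriv 4 (fun z => w1 z t) ζ
        = deriv ω3 t * w2 ζ t - (deriv ω2 t + ω1 t * ω3 t) * (ζ + ℓ0)
          + 2 * ω3 t * deriv (w2 ζ) t)
    (hpde2 : ∀ t, ∀ ζ ∈ Set.Icc 0 ℓ,
      deriv (deriv (w2 ζ)) t + (E * I / (ρ * A)) * iteratedDeriv 4 (fun z => w2 z t) ζ
        = -(deriv ω3 t) * w1 ζ t + (deriv ω1 t - ω2 t * ω3 t) * (ζ + ℓ0)
          - 2 * ω3 t * deriv (w1 ζ) t)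
    (hbc0 : ∀ t, w1 0 t = 0 ∧ w2 0 t = 0 ∧
      deriv (fun z => w1 z t) 0 = 0 ∧ deriv (fun z => w2 z t) 0 = 0)
    (hbcℓ : ∀ t, iteratedDeriv 2 (fun z => w1 z t) ℓ = 0 ∧
      iteratedDeriv 2 (fun z => w2 z t) ℓ = 0 ∧
      iteratedDeriv 3 (fun z => w1 z t) ℓ = 0 ∧
      iteratedDeriv 3 (fun z => w2 z t) ℓ = 0) :
    ∀ t : ℝ,
      HasDerivAt
        (fun s => (1 / 2) * ∫ ζ in (0:ℝ)..ℓ,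
          (deriv (w1 ζ) s) ^ 2 + (deriv (w2 ζ) s) ^ 2 +
            (E * I / (ρ * A)) *
              ((iteratedDeriv 2 (fun z => w1 z s) ζ) ^ 2 +
                (iteratedDeriv 2 (fun z => w2 z s) ζ) ^ 2))
        ((deriv ω1 t - ω2 t * ω3 t) * (∫ ζ in (0:ℝ)..ℓ, (ζ + ℓ0) * deriv (w2 ζ) t)
          + (deriv ω2 t + ω1 t * ω3 t) * (-∫ ζ in (0:ℝ)..ℓ, (ζ + ℓ0) * deriv (w1 ζ) t)
          + deriv ω3 t *
            (∫ ζ in (0:ℝ)..ℓ, (w2 ζ t * deriv (w1 ζ) t - w1 ζ t * deriv (w2 ζ) t)))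
        t := by
  intro t
  have hu1 : ContDiff ℝ (⊤ : ℕ∞) (unc w1) := hw1
  have hu2 : ContDiff ℝ (⊤ : ℕ∞) (unc w2) := hw2
  have hd1 : ∀ ζ s, deriv (w1 ζ) s = pdT (unc w1) (ζ, s) := fun ζ s =>
    (hasDerivAt_sliceT hu1 ζ s).deriv
  have hd2 : ∀ ζ s, deriv (w2 ζ) s = pdT (unc w2) (ζ, s) := fun ζ s =>
    (hasDerivAt_sliceT hu2 ζ s).deriv
  have hdd1 : ∀ ζ, deriv (deriv (w1 ζ)) t = pdT (pdT (unc w1)) (ζ, t) := fun ζ => by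
    have h : deriv (w1 ζ) = fun s => pdT (unc w1) (ζ, s) := funext fun s => hd1 ζ s
    rw [h]
    exact (hasDerivAt_sliceT (pdT_contDiff hu1) ζ t).deriv
  have hdd2 : ∀ ζ, deriv (deriv (w2 ζ)) t = pdT (pdT (unc w2)) (ζ, t) := fun ζ => by
    have h : deriv (w2 ζ) = fun s => pdT (unc w2) (ζ, s) := funext fun s => hd2 ζ s
    rw [h]
    exact (hasDerivAt_sliceT (pdT_contDiff hu2) ζ t).deriv
  have hi2 : ∀ s, iteratedDeriv 2 (fun z => w1 z s) = fun ζ => pdn 2 (unc w1) (ζ, s) :=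
    fun s => iteratedDeriv_slice hu1 s 2
  have hj2 : ∀ s, iteratedDeriv 2 (fun z => w2 z s) = fun ζ => pdn 2 (unc w2) (ζ, s) :=
    fun s => iteratedDeriv_slice hu2 s 2
  have hi3 : iteratedDeriv 3 (fun z => w1 z t) = fun ζ => pdn 3 (unc w1) (ζ, t) :=
    iteratedDeriv_slice hu1 t 3
  have hj3 : iteratedDeriv 3 (fun z => w2 z t) = fun ζ => pdn 3 (unc w2) (ζ, t) :=
    iteratedDeriv_slice hu2 t 3
  have hi4 : iteratedDeriv 4 (fun z => w1 z t) = fun ζ => pdn 4 (unc w1) (ζ, t) :=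
    iteratedDeriv_slice hu1 t 4
  have hj4 : iteratedDeriv 4 (fun z => w2 z t) = fun ζ => pdn 4 (unc w2) (ζ, t) :=
    iteratedDeriv_slice hu2 t 4
  have hb1 : pdT (unc w1) (0, t) = 0 := by
    have h : (fun s => unc w1 (0, s)) = fun _ => (0:ℝ) := funext fun s => (hbc0 s).1
    rw [← (hasDerivAt_sliceT hu1 0 t).deriv, h]; simp
  have hb2 : pdT (unc w2) (0, t) = 0 := by
    have h : (fun s => unc w2 (0, s)) = fun _ => (0:ℝ) := funext fun s => (hbc0 s).2.1
    rw [← (hasDerivAt_sliceT hu2 0 t).deriv, h]; simp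
  have hb1' : pdZ (pdT (unc w1)) (0, t) = 0 := by
    rw [pd_swap hu1]
    have h : (fun s => pdZ (unc w1) (0, s)) = fun _ => (0:ℝ) := funext fun s => by
      rw [← (hasDerivAt_sliceZ hu1 0 s).deriv]
      exact (hbc0 s).2.2.1
    rw [← (hasDerivAt_sliceT (pdZ_contDiff hu1) 0 t).deriv, h]; simp
  have hb2' : pdZ (pdT (unc w2)) (0, t) = 0 := by
    rw [pd_swap hu2]
    have h : (fun s => pdZ (unc w2) (0, s)) = fun _ => (0:ℝ) := funext fun s => by
      rw [← (hasDerivAt_sliceZ hu2 0 s).deriv]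
      exact (hbc0 s).2.2.2
    rw [← (hasDerivAt_sliceT (pdZ_contDiff hu2) 0 t).deriv, h]; simp
  have hl1 : pdn 2 (unc w1) (ℓ, t) = 0 := by
    rw [← congrFun (hi2 t) ℓ]; exact (hbcℓ t).1
  have hl2 : pdn 2 (unc w2) (ℓ, t) = 0 := by
    rw [← congrFun (hj2 t) ℓ]; exact (hbcℓ t).2.1
  have hl1' : pdn 3 (unc w1) (ℓ, t) = 0 := by
    rw [← congrFun hi3 ℓ]; exact (hbcℓ t).2.2.1
  have hl2' : pdn 3 (unc w2) (ℓ, t) = 0 := by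
    rw [← congrFun hj3 ℓ]; exact (hbcℓ t).2.2.2
  have hp1 : ∀ ζ ∈ Set.Icc (0:ℝ) ℓ,
      pdT (pdT (unc w1)) (ζ, t) + (E * I / (ρ * A)) * pdn 4 (unc w1) (ζ, t)
        = deriv ω3 t * unc w2 (ζ, t) - (deriv ω2 t + ω1 t * ω3 t) * (ζ + ℓ0)
          + 2 * ω3 t * pdT (unc w2) (ζ, t) := fun ζ hζ => by
    have h := hpde1 t ζ hζ
    rw [hdd1 ζ, congrFun hi4 ζ, hd2 ζ t] at h
    exact h
  have hp2 : ∀ ζ ∈ Set.Icc (0:ℝ) ℓ,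
      pdT (pdT (unc w2)) (ζ, t) + (E * I / (ρ * A)) * pdn 4 (unc w2) (ζ, t)
        = -(deriv ω3 t) * unc w1 (ζ, t) + (deriv ω1 t - ω2 t * ω3 t) * (ζ + ℓ0)
          - 2 * ω3 t * pdT (unc w1) (ζ, t) := fun ζ hζ => by
    have h := hpde2 t ζ hζ
    rw [hdd2 ζ, congrFun hj4 ζ, hd1 ζ t] at h
    exact h
  have core := beam_core (E * I / (ρ * A)) ℓ ℓ0 hℓ (unc w1) (unc w2) hu1 hu2
    (deriv ω2 t + ω1 t * ω3 t) (deriv ω1 t - ω2 t * ω3 t) (deriv ω3 t) (ω3 t) t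
    hp1 hp2 hb1 hb2 hb1' hb2' hl1 hl2 hl1' hl2'
  have hfneq : (fun s => (1 / 2) * ∫ ζ in (0:ℝ)..ℓ,
        (deriv (w1 ζ) s) ^ 2 + (deriv (w2 ζ) s) ^ 2 +
          (E * I / (ρ * A)) *
            ((iteratedDeriv 2 (fun z => w1 z s) ζ) ^ 2 +
              (iteratedDeriv 2 (fun z => w2 z s) ζ) ^ 2))
      = (fun s => (1 / 2) * ∫ ζ in (0:ℝ)..ℓ,
        (pdT (unc w1) (ζ, s)) ^ 2 + (pdT (unc w2) (ζ, s)) ^ 2 +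
          (E * I / (ρ * A)) *
            ((pdn 2 (unc w1) (ζ, s)) ^ 2 + (pdn 2 (unc w2) (ζ, s)) ^ 2)) := by
    funext s
    congr 1
    refine intervalIntegral.integral_congr fun ζ _ => ?_
    rw [hd1 ζ s, hd2 ζ s, congrFun (hi2 s) ζ, congrFun (hj2 s) ζ]
  have hv1 : (∫ ζ in (0:ℝ)..ℓ, (ζ + ℓ0) * deriv (w2 ζ) t)
      = ∫ ζ in (0:ℝ)..ℓ, (ζ + ℓ0) * pdT (unc w2) (ζ, t) :=
    intervalIntegral.integral_congr fun ζ _ => by rw [hd2 ζ t]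
  have hv2 : (∫ ζ in (0:ℝ)..ℓ, (ζ + ℓ0) * deriv (w1 ζ) t)
      = ∫ ζ in (0:ℝ)..ℓ, (ζ + ℓ0) * pdT (unc w1) (ζ, t) :=
    intervalIntegral.integral_congr fun ζ _ => by rw [hd1 ζ t]
  have hv3 : (∫ ζ in (0:ℝ)..ℓ, (w2 ζ t * deriv (w1 ζ) t - w1 ζ t * deriv (w2 ζ) t))
      = ∫ ζ in (0:ℝ)..ℓ,
          (unc w2 (ζ, t) * pdT (unc w1) (ζ, t) - unc w1 (ζ, t) * pdT (unc w2) (ζ, t)) :=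
    intervalIntegral.integral_congr fun ζ _ => by rw [hd1 ζ t, hd2 ζ t]; rfl
  rw [hfneq, hv1, hv2, hv3]
  exact core
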